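/- Let A be a complex unital Banach algebra and let f : ℂ → A be analytic on a neighborhood of z, with f(w) a unit of A for all w near z and f'(z) a unit of A. Define S₁(f)(z) = −(1/2)·f'(z)⁻¹·f'''(z) + (3/4)·(f'(z)⁻¹·f''(z))², and let g(w) = f(w)⁻¹ (analytic near z, with g'(z) a unit). Then S₁(g)(z) = f(z)·S₁(f)(z)·f(z)⁻¹. -/

import Mathlib

/-!
Differentiating `f⁻¹ * f = 1` three times expresses the first three derivatives of `g = f⁻¹`
at `z` through `a = f z` and the derivatives of `f`; in particular `g' = -a⁻¹ f' a⁻¹` is a unit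
with inverse `-a f'⁻¹ a`. Substituting, the terms of `S₁(g)` that involve `a⁻¹ f'` cancel and
what remains is `S₁(f)` conjugated by `a`.
-/

open Filter

/-- The lowest noncommutative Schwarzian
`S₁(f)(z) = −(1/2)·f'(z)⁻¹·f'''(z) + (3/4)·(f'(z)⁻¹·f''(z))²`. -/
noncomputable def S1 {A : Type*} [NormedRing A] [NormedAlgebra ℂ A]
    (f : ℂ → A) (z : ℂ) : A :=
  (-(1 / 2) : ℂ) • (Ring.inverse (deriv f z) * deriv (deriv (deriv f)) z)
    + ((3 / 4) : ℂ) • (Ring.inverse (deriv f z) * deriv (deriv f) z) ^ 2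

open Topology

theorem AnalyticAt.ringInverse {𝕜 E A : Type*} [NontriviallyNormedField 𝕜] [NormedAddCommGroup E]
    [NormedSpace 𝕜 E] [NormedRing A] [NormedAlgebra 𝕜 A] [HasSummableGeomSeries A]
    {f : E → A} {z : E} (hf : AnalyticAt 𝕜 f z) (hfz : IsUnit (f z)) :
    AnalyticAt 𝕜 (fun w => Ring.inverse (f w)) z :=
  (hfz.unit_spec ▸ analyticAt_inverse hfz.unit).comp hf

section Leibniz

variable {𝕜 A : Type*} [NontriviallyNormedField 𝕜] [NormedRing A] [NormedAlgebra 𝕜 A]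

theorem sum_choose_smul_iteratedDeriv_eq_zero_of_mul_eventuallyEq_one {f g : 𝕜 → A} {z : 𝕜}
    {n : ℕ} (hn : n ≠ 0) (hg : ContDiffAt 𝕜 n g z) (hf : ContDiffAt 𝕜 n f z)
    (hgf : g * f =ᶠ[𝓝 z] 1) :
    ∑ i ∈ Finset.range (n + 1),
      n.choose i • (iteratedDeriv i g z * iteratedDeriv (n - i) f z) = 0 := by
  simp only [nsmul_eq_mul, ← mul_assoc, ← iteratedDerivWithin_univ]
  rw [← iteratedDerivWithin_mul (Set.mem_univ z) uniqueDiffOn_univ hg.contDiffWithinAt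
    hf.contDiffWithinAt, iteratedDerivWithin_univ, hgf.iteratedDeriv_eq, Pi.one_def,
    iteratedDeriv_const, if_neg hn]

theorem leibniz_three_of_mul_eventuallyEq_one {f g : 𝕜 → A} {z : 𝕜}
    (hg : ContDiffAt 𝕜 3 g z) (hf : ContDiffAt 𝕜 3 f z) (hgf : g * f =ᶠ[𝓝 z] 1) :
    g z * deriv f z + deriv g z * f z = 0 ∧
    g z * deriv (deriv f) z + 2 • (deriv g z * deriv f z) + deriv (deriv g) z * f z = 0 ∧
    g z * deriv (deriv (deriv f)) z + 3 • (deriv g z * deriv (deriv f) z)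
      + 3 • (deriv (deriv g) z * deriv f z) + deriv (deriv (deriv g)) z * f z = 0 := by
  have leibniz {n : ℕ} (hn : n ≠ 0) (hn3 : n ≤ 3) :=
    sum_choose_smul_iteratedDeriv_eq_zero_of_mul_eventuallyEq_one hn
      (hg.of_le (by exact_mod_cast hn3)) (hf.of_le (by exact_mod_cast hn3)) hgf
  refine ⟨?_, ?_, ?_⟩
  · simpa [Finset.sum_range_succ, -nsmul_eq_mul] using leibniz one_ne_zero (by norm_num)
  · simpa [Finset.sum_range_succ, iteratedDeriv_succ, -nsmul_eq_mul]
      using leibniz two_ne_zero (by norm_num)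
  · simpa [Finset.sum_range_succ, iteratedDeriv_succ, -nsmul_eq_mul]
      using leibniz three_ne_zero le_rfl

end Leibniz

section Jet

variable {A : Type*} [Ring A] [Algebra ℂ A]

noncomputable def schwarzianJet (d₁ d₂ d₃ : A) : A :=
  (-(1 / 2) : ℂ) • (Ring.inverse d₁ * d₃) + ((3 / 4) : ℂ) • (Ring.inverse d₁ * d₂) ^ 2

theorem schwarzianJet_eq_conj_of_leibniz (a p : Aˣ) {r s g₁ g₂ g₃ : A}
    (h₁ : ↑a⁻¹ * ↑p + g₁ * a = 0)
    (h₂ : ↑a⁻¹ * r + 2 • (g₁ * p) + g₂ * a = 0)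
    (h₃ : ↑a⁻¹ * s + 3 • (g₁ * r) + 3 • (g₂ * p) + g₃ * a = 0) :
    schwarzianJet g₁ g₂ g₃ = a * schwarzianJet (p : A) r s * ↑a⁻¹ := by
  have solve {x y : A} (h : x + y * a = 0) : y = -x * ↑a⁻¹ :=
    a.eq_mul_inv_iff_mul_eq.mpr (eq_neg_of_add_eq_zero_right h)
  have e₁ := solve h₁
  have hinv : Ring.inverse g₁ = -(a * ↑p⁻¹ * a) := by
    rw [e₁, show -(↑a⁻¹ * ↑p : A) * ↑a⁻¹ = ↑(-(a⁻¹ * p * a⁻¹)) by simp, Ring.inverse_unit]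
    simp [mul_assoc]
  rw [schwarzianJet, schwarzianJet, hinv, solve h₃, solve h₂, e₁]
  simp only [pow_two, mul_add, add_mul, mul_neg, neg_mul, neg_neg, smul_add, smul_neg,
    mul_smul_comm, smul_mul_assoc, mul_assoc, Units.mul_inv_cancel_left,
    Units.inv_mul_cancel_left, Ring.inverse_unit]
  module

end Jet

theorem S1_eq_schwarzianJet {A : Type*} [NormedRing A] [NormedAlgebra ℂ A] (f : ℂ → A) (z : ℂ) :
    S1 f z = schwarzianJet (deriv f z) (deriv (deriv f) z) (deriv (deriv (deriv f)) z) := rfl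

theorem S1_semi_invariance_inversion_general
    (A : Type*) [NormedRing A] [NormedAlgebra ℂ A] [CompleteSpace A]
    (f g : ℂ → A) (z : ℂ)
    (hf : AnalyticAt ℂ f z)
    (hfu : ∀ᶠ w in nhds z, IsUnit (f w))
    (hf' : IsUnit (deriv f z))
    (hg : g = fun w => Ring.inverse (f w)) :
    S1 g z = f z * S1 f z * Ring.inverse (f z) := by
  have hga : AnalyticAt ℂ g z := hg ▸ hf.ringInverse hfu.self_of_nhds
  have hgf : g * f =ᶠ[𝓝 z] 1 :=
    hfu.mono fun w hw => by simp [hg, Ring.inverse_mul_cancel _ hw]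
  obtain ⟨h₁, h₂, h₃⟩ := leibniz_three_of_mul_eventuallyEq_one hga.contDiffAt hf.contDiffAt hgf
  obtain ⟨a, ha⟩ := hfu.self_of_nhds
  obtain ⟨p, hp⟩ := hf'
  have hgz : g z = ↑a⁻¹ := by rw [hg, ← Ring.inverse_unit, ha]
  rw [hgz, ← hp, ← ha] at h₁ h₂ h₃
  rw [S1_eq_schwarzianJet, S1_eq_schwarzianJet, ← hp, ← ha, Ring.inverse_unit]
  exact schwarzianJet_eq_conj_of_leibniz a p h₁ h₂ h₃

/-- The inversion case (`𝔠 = 1, 𝔡 = 0`) of the projective semi-invariance of the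
noncommutative Schwarzian `S₁`: `S₁(f⁻¹)(z) = f(z)·S₁(f)(z)·f(z)⁻¹`. -/
theorem S1_semi_invariance_inversion
    (A : Type*) [NormedRing A] [NormedAlgebra ℂ A] [CompleteSpace A]
    (f g : ℂ → A) (z : ℂ)
    (hf : AnalyticAt ℂ f z)
    (hfu : ∀ᶠ w in nhds z, IsUnit (f w))
    (hf' : IsUnit (deriv f z))
    (hg : g = fun w => Ring.inverse (f w))
    (hg' : IsUnit (deriv g z)) :
    S1 g z = f z * S1 f z * Ring.inverse (f z) :=
  S1_semi_invariance_inversion_general A f g z hf hfu hf' hg
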